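/- For every t ≥ 1, the membrane potential of the LIF network with a feedback connection satisfies u(t) = Û(t) − V_th λ â(t−1), where Û is the feedback potential accumulation defined by the closed form Û(t) = W â_x(t) + (Σ_{τ=0}^{t−1} λ^τ) b + λ^t u(0) + W_b â_b(t−1). -/
import Mathlib


open Finset Matrix

/-- The Heaviside step function: `H z = 1` if `z ≥ 0`, else `0`. -/
noncomputable def Heaviside (z : ℝ) : ℝ := if 0 ≤ z then 1 else 0

lemma acc_succ {k : ℕ} (lam : ℝ) (a : ℕ → Fin k → ℝ) (t : ℕ) :
    (∑ τ ∈ Finset.range (t + 2), lam ^ (t + 1 - τ) • a τ)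
      = lam • (∑ τ ∈ Finset.range (t + 1), lam ^ (t - τ) • a τ) + a (t + 1) := by
  rw [Finset.sum_range_succ, Nat.sub_self, pow_zero, one_smul, Finset.smul_sum]
  congr 1
  apply Finset.sum_congr rfl
  intro τ hτ
  rw [Finset.mem_range] at hτ
  rw [← smul_assoc, smul_eq_mul, ← pow_succ']
  congr 2
  omega

/-- with a feedback connection, for every `t ≥ 1`,
`u(t) = Û(t) − V_th λ â(t−1)` where `Û` is the feedback potential accumulation. -/
theorem lif_feedback_potential_eq_saf
    (lam Vth : ℝ) (m n p : ℕ)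
    (W : Matrix (Fin n) (Fin m) ℝ) (Wb : Matrix (Fin n) (Fin p) ℝ)
    (b : Fin n → ℝ)
    (x : ℕ → Fin m → ℝ) (hx0 : x 0 = 0)
    (xb : ℕ → Fin p → ℝ) (hxc0 : xb 0 = 0)
    (u s : ℕ → Fin n → ℝ)
    (hs0 : s 0 = 0)
    (hu : ∀ t, 1 ≤ t →
      u t = lam • (u (t - 1) - Vth • s (t - 1)) + W.mulVec (x t) + b
        + Wb.mulVec (xb (t - 1)))
    (hs : ∀ t, 1 ≤ t → ∀ i, s t i = Heaviside (u t i - Vth))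
    (ax : ℕ → Fin m → ℝ)
    (hax : ∀ t, ax t = ∑ τ ∈ Finset.range (t + 1), lam ^ (t - τ) • x τ)
    (ab : ℕ → Fin p → ℝ)
    (hac : ∀ t, ab t = ∑ τ ∈ Finset.range (t + 1), lam ^ (t - τ) • xb τ)
    (ahat : ℕ → Fin n → ℝ)
    (ha : ∀ t, ahat t = ∑ τ ∈ Finset.range (t + 1), lam ^ (t - τ) • s τ)
    (U : ℕ → Fin n → ℝ)
    (hU0 : U 0 = u 0)
    (hU : ∀ t, 1 ≤ t →
      U t = W.mulVec (ax t) + (∑ τ ∈ Finset.range t, lam ^ τ) • b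
        + lam ^ t • u 0 + Wb.mulVec (ab (t - 1))) :
    ∀ t, 1 ≤ t → u t = U t - (Vth * lam) • ahat (t - 1) := by
  have hax_succ : ∀ t, ax (t + 1) = lam • ax t + x (t + 1) := by
    intro t; rw [hax, hax, acc_succ]
  have hab_succ : ∀ t, ab (t + 1) = lam • ab t + xb (t + 1) := by
    intro t; rw [hac, hac, acc_succ]
  have hah_succ : ∀ t, ahat (t + 1) = lam • ahat t + s (t + 1) := by
    intro t; rw [ha, ha, acc_succ]
  have hax0 : ax 0 = 0 := by
    rw [hax]; simp [hx0]
  have hab0 : ab 0 = 0 := by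
    rw [hac]; simp [hxc0]
  have hah0 : ahat 0 = 0 := by
    rw [ha]; simp [hs0]
  intro t ht
  induction t with
  | zero => omega
  | succ t ih =>
    rcases Nat.eq_zero_or_pos t with h0 | hpos
    · subst h0
      have h1 := hu 1 le_rfl
      have h2 := hU 1 le_rfl
      simp only [Nat.sub_self, hs0, hx0, hxc0] at h1 h2 ⊢
      rw [h1, h2, hax_succ 0, hax0, hab0, hah0]
      simp only [Matrix.mulVec_zero, smul_zero, sub_zero, add_zero, smul_zero,
        zero_add, pow_one, Finset.range_one, Finset.sum_singleton, pow_zero,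
        one_smul, Matrix.mulVec_add]
      module
    · have ih' := ih hpos
      have h1 := hu (t + 1) (by omega)
      have h2 := hU (t + 1) (by omega)
      have h3 := hU t hpos
      simp only [Nat.add_sub_cancel] at h1 h2 ⊢
      rw [h1, ih', h3, h2, hax_succ]
      have hab' : ab t = lam • ab (t - 1) + xb t := by
        obtain ⟨t', rfl⟩ : ∃ t', t = t' + 1 := ⟨t - 1, by omega⟩
        simpa using hab_succ t'
      have hah' : ahat t = lam • ahat (t - 1) + s t := by
        obtain ⟨t', rfl⟩ : ∃ t', t = t' + 1 := ⟨t - 1, by omega⟩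
        simpa using hah_succ t'
      have hsum : (∑ τ ∈ Finset.range (t + 1), lam ^ τ)
          = lam * (∑ τ ∈ Finset.range t, lam ^ τ) + 1 := by
        rw [Finset.mul_sum]
        rw [Finset.sum_range_succ' (fun τ => lam ^ τ)]
        simp [pow_succ, mul_comm]
      rw [hab', hah', hsum]
      simp only [Matrix.mulVec_add, Matrix.mulVec_smul, pow_succ]
      ext i
      simp [Matrix.mulVec, Pi.smul_apply, smul_eq_mul]
      ring
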